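/- arXiv:1704.06554 — 9 statements merged into one kernel-verified Lean document; each statement's English description precedes it below -/
import Mathlib

section
/- The set {7, 14, 41} is a P_2 set, and it cannot be extended: there is no positive integer m with m ∉ {7, 14, 41} such that 7m + 2, 14m + 2, and 41m + 2 are all perfect squares. -/
/-- A set `S` of distinct positive integers is a `P_k` set (property `D(k)`)
if `a * b + k` is a perfect square for all distinct `a, b ∈ S`. -/
def IsPSet (k : ℤ) (S : Set ℤ) : Prop :=
  (∀ a ∈ S, 0 < a) ∧ ∀ a ∈ S, ∀ b ∈ S, a ≠ b → IsSquare (a * b + k)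

lemma mod4 : ∀ x : ZMod 4, ¬(IsSquare (7*x+2) ∧ IsSquare (14*x+2) ∧ IsSquare (41*x+2)) := by
  decide

theorem stmt_0 :
    IsPSet (2) {7, 14, 41} ∧
    ¬ ∃ m : ℤ, 0 < m ∧ m ∉ ({7, 14, 41} : Set ℤ) ∧
      IsSquare (7 * m + (2)) ∧ IsSquare (14 * m + (2)) ∧ IsSquare (41 * m + (2)) := by
  constructor
  · constructor
    · rintro a (rfl | rfl | rfl) <;> norm_num
    · rintro a (rfl | rfl | rfl) b (rfl | rfl | rfl) hne
      · exact absurd rfl hne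
      · exact ⟨10, by norm_num⟩
      · exact ⟨17, by norm_num⟩
      · exact ⟨10, by norm_num⟩
      · exact absurd rfl hne
      · exact ⟨24, by norm_num⟩
      · exact ⟨17, by norm_num⟩
      · exact ⟨24, by norm_num⟩
      · exact absurd rfl hne
  · rintro ⟨m, -, -, h1, h2, h3⟩
    apply mod4 (m : ZMod 4)
    have f := (Int.castRingHom (ZMod 4))
    refine ⟨?_, ?_, ?_⟩
    · have := h1.map (Int.castRingHom (ZMod 4)); simpa using this
    · have := h2.map (Int.castRingHom (ZMod 4)); simpa using this
    · have := h3.map (Int.castRingHom (ZMod 4)); simpa using this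
end

section
/- The set {1, 7, 14} is a P_2 set, and it cannot be extended: there is no positive integer m with m ∉ {1, 7, 14} such that m + 2, 7m + 2, and 14m + 2 are all perfect squares. -/
theorem stmt_1 :
    IsPSet (2) {1, 7, 14} ∧
    ¬ ∃ m : ℤ, 0 < m ∧ m ∉ ({1, 7, 14} : Set ℤ) ∧
      IsSquare (1 * m + (2)) ∧ IsSquare (7 * m + (2)) ∧ IsSquare (14 * m + (2)) := by
  constructor
  · constructor
    · rintro a (rfl | rfl | rfl) <;> norm_num
    · have h9 : IsSquare ((9:ℤ)) := ⟨3, by norm_num⟩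
      have h16 : IsSquare ((16:ℤ)) := ⟨4, by norm_num⟩
      have h100 : IsSquare ((100:ℤ)) := ⟨10, by norm_num⟩
      rintro a (rfl | rfl | rfl) b (rfl | rfl | rfl) hab <;>
        first
        | exact absurd rfl hab
        | norm_num [h9, h16, h100]
  · rintro ⟨m, hm, hnot, ⟨x, hx⟩, ⟨y, hy⟩, ⟨z, hz⟩⟩
    have h4 : ∀ a b c d : ZMod 4,
        ¬(1 * a + 2 = b * b ∧ 7 * a + 2 = c * c ∧ 14 * a + 2 = d * d) := by decide
    apply h4 (m : ZMod 4) (x : ZMod 4) (y : ZMod 4) (z : ZMod 4)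
    refine ⟨?_, ?_, ?_⟩
    · exact_mod_cast congrArg (fun n : ℤ => (n : ZMod 4)) hx
    · exact_mod_cast congrArg (fun n : ℤ => (n : ZMod 4)) hy
    · exact_mod_cast congrArg (fun n : ℤ => (n : ZMod 4)) hz
end

section
/- The set {41, 239, 478} is a P_2 set, and it cannot be extended: there is no positive integer m with m ∉ {41, 239, 478} such that 41m + 2, 239m + 2, and 478m + 2 are all perfect squares. -/
lemma mod8 : ∀ m z x y : ZMod 8,
    41 * m + 2 = z * z → 239 * m + 2 = x * x → 478 * m + 2 = y * y → False := by
  decide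

theorem stmt_2 :
    IsPSet (2) {41, 239, 478} ∧
    ¬ ∃ m : ℤ, 0 < m ∧ m ∉ ({41, 239, 478} : Set ℤ) ∧
      IsSquare (41 * m + (2)) ∧ IsSquare (239 * m + (2)) ∧ IsSquare (478 * m + (2)) := by
  constructor
  · constructor
    · intro a ha
      simp only [Set.mem_insert_iff, Set.mem_singleton_iff] at ha
      rcases ha with rfl | rfl | rfl <;> norm_num
    · intro a ha b hb hab
      simp only [Set.mem_insert_iff, Set.mem_singleton_iff] at ha hb
      rcases ha with rfl | rfl | rfl <;> rcases hb with rfl | rfl | rfl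
      · exact absurd rfl hab
      · exact ⟨99, by norm_num⟩
      · exact ⟨140, by norm_num⟩
      · exact ⟨99, by norm_num⟩
      · exact absurd rfl hab
      · exact ⟨338, by norm_num⟩
      · exact ⟨140, by norm_num⟩
      · exact ⟨338, by norm_num⟩
      · exact absurd rfl hab
  · rintro ⟨m, -, -, ⟨z, hz⟩, ⟨x, hx⟩, ⟨y, hy⟩⟩
    have hz' := congrArg (Int.cast : ℤ → ZMod 8) hz
    have hx' := congrArg (Int.cast : ℤ → ZMod 8) hx
    have hy' := congrArg (Int.cast : ℤ → ZMod 8) hy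
    push_cast at hz' hx' hy'
    exact mod8 m z x y hz' hx' hy'
end

section
/- The set {3, 4, 13} is a P_{-3} set, and it cannot be extended: there is no positive integer m with m ∉ {3, 4, 13} such that 3m − 3, 4m − 3, and 13m − 3 are all perfect squares. -/
theorem stmt_3 :
    IsPSet ((-3)) {3, 4, 13} ∧
    ¬ ∃ m : ℤ, 0 < m ∧ m ∉ ({3, 4, 13} : Set ℤ) ∧
      IsSquare (3 * m + ((-3))) ∧ IsSquare (4 * m + ((-3))) ∧ IsSquare (13 * m + ((-3))) := by
  constructor
  · constructor
    · intro a ha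
      simp only [Set.mem_insert_iff, Set.mem_singleton_iff] at ha
      rcases ha with rfl | rfl | rfl <;> norm_num
    · intro a ha b hb hab
      simp only [Set.mem_insert_iff, Set.mem_singleton_iff] at ha hb
      rcases ha with rfl | rfl | rfl <;> rcases hb with rfl | rfl | rfl
      · exact absurd rfl hab
      · exact ⟨3, by norm_num⟩
      · exact ⟨6, by norm_num⟩
      · exact ⟨3, by norm_num⟩
      · exact absurd rfl hab
      · exact ⟨7, by norm_num⟩
      · exact ⟨6, by norm_num⟩
      · exact ⟨7, by norm_num⟩
      · exact absurd rfl hab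
  · rintro ⟨m, hm, hnot, ⟨a, ha⟩, ⟨b, hb⟩, ⟨c, hc⟩⟩
    have key : ∀ m a b c : ZMod 8,
        3 * m + (-3) = a * a → 4 * m + (-3) = b * b → 13 * m + (-3) = c * c → False := by
      decide
    have Ha := congrArg (fun z : ℤ => (z : ZMod 8)) ha
    have Hb := congrArg (fun z : ℤ => (z : ZMod 8)) hb
    have Hc := congrArg (fun z : ℤ => (z : ZMod 8)) hc
    push_cast at Ha Hb Hc
    exact key _ _ _ _ Ha Hb Hc
end

section
/- The set {7, 41, 82} is a P_2 set, and it cannot be extended: there is no positive integer m with m ∉ {7, 41, 82} such that 7m + 2, 41m + 2, and 82m + 2 are all perfect squares. -/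
theorem stmt_4 :
    IsPSet (2) {7, 41, 82} ∧
    ¬ ∃ m : ℤ, 0 < m ∧ m ∉ ({7, 41, 82} : Set ℤ) ∧
      IsSquare (7 * m + (2)) ∧ IsSquare (41 * m + (2)) ∧ IsSquare (82 * m + (2)) := by
  constructor
  · constructor
    · intro a ha
      simp only [Set.mem_insert_iff, Set.mem_singleton_iff] at ha
      rcases ha with rfl | rfl | rfl <;> norm_num
    · intro a ha b hb hab
      simp only [Set.mem_insert_iff, Set.mem_singleton_iff] at ha hb
      rcases ha with rfl | rfl | rfl <;> rcases hb with rfl | rfl | rfl <;>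
        first
          | exact absurd rfl hab
          | exact ⟨17, by decide⟩
          | exact ⟨24, by decide⟩
          | exact ⟨58, by decide⟩
  · rintro ⟨m, hm, hmem, ⟨a, ha⟩, ⟨b, hb⟩, ⟨c, hc⟩⟩
    have key : ∀ x a b c : ZMod 8,
        7 * x + 2 ≠ a * a ∨ 41 * x + 2 ≠ b * b ∨ 82 * x + 2 ≠ c * c := by decide
    have h1 : (7 * (m : ZMod 8) + 2) = (a : ZMod 8) * a := by
      have := congrArg (fun z : ℤ => (z : ZMod 8)) ha
      push_cast at this ⊢
      exact this
    have h2 : (41 * (m : ZMod 8) + 2) = (b : ZMod 8) * b := by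
      have := congrArg (fun z : ℤ => (z : ZMod 8)) hb
      push_cast at this ⊢
      exact this
    have h3 : (82 * (m : ZMod 8) + 2) = (c : ZMod 8) * c := by
      have := congrArg (fun z : ℤ => (z : ZMod 8)) hc
      push_cast at this ⊢
      exact this
    rcases key m a b c with h | h | h
    · exact h h1
    · exact h h2
    · exact h h3
end

section
/- The set {41, 82, 239} is a P_2 set, and it cannot be extended: there is no positive integer m with m ∉ {41, 82, 239} such that 41m + 2, 82m + 2, and 239m + 2 are all perfect squares. -/
theorem stmt_5 :
    IsPSet (2) {41, 82, 239} ∧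
    ¬ ∃ m : ℤ, 0 < m ∧ m ∉ ({41, 82, 239} : Set ℤ) ∧
      IsSquare (41 * m + (2)) ∧ IsSquare (82 * m + (2)) ∧ IsSquare (239 * m + (2)) := by
  constructor
  · constructor
    · rintro a (rfl | rfl | rfl) <;> norm_num
    · rintro a (rfl | rfl | rfl) b (rfl | rfl | rfl) h <;> simp_all <;>
        [exact ⟨58, by norm_num⟩; exact ⟨99, by norm_num⟩; exact ⟨58, by norm_num⟩;
         exact ⟨140, by norm_num⟩; exact ⟨99, by norm_num⟩; exact ⟨140, by norm_num⟩]
  · rintro ⟨m, -, -, h1, h2, h3⟩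
    have key : ∀ x : ZMod 4, ¬ (IsSquare (41 * x + 2) ∧ IsSquare (82 * x + 2) ∧
        IsSquare (239 * x + 2)) := by decide
    exact key (m : ZMod 4)
      ⟨by exact_mod_cast (h1.map (Int.castRingHom (ZMod 4))),
       by exact_mod_cast (h2.map (Int.castRingHom (ZMod 4))),
       by exact_mod_cast (h3.map (Int.castRingHom (ZMod 4)))⟩
end

section
/- There is no positive integer m such that 7m + 2, 14m + 2 and 41m + 2 are all perfect squares; that is, the simultaneous conditions 7m + 2 = x², 14m + 2 = y², 41m + 2 = z² have no solution in positive integers m, x, y, z. -/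
lemma aux13 : ∀ a b c : ZMod 8, ¬ (b^2 = 2*a^2 - 2 ∧ 7*c^2 = 41*a^2 - 68) := by decide

theorem stmt_13 :
    ¬ ∃ m x y z : ℤ, 0 < m ∧ 0 < x ∧ 0 < y ∧ 0 < z ∧
      7 * m + 2 = x ^ 2 ∧ 14 * m + 2 = y ^ 2 ∧ 41 * m + 2 = z ^ 2 := by
  rintro ⟨m, x, y, z, hm, hx, hy, hz, h1, h2, h3⟩
  have e1 : y^2 = 2*x^2 - 2 := by linarith
  have e2 : 7*z^2 = 41*x^2 - 68 := by linarith
  have e1' : (y:ZMod 8)^2 = 2*(x:ZMod 8)^2 - 2 := by exact_mod_cast congrArg (Int.cast : ℤ → ZMod 8) e1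
  have e2' : 7*(z:ZMod 8)^2 = 41*(x:ZMod 8)^2 - 68 := by exact_mod_cast congrArg (Int.cast : ℤ → ZMod 8) e2
  exact aux13 _ _ _ ⟨e1', e2'⟩
end

section
/- The simultaneous conditions m + 2 = x², 7m + 2 = y², 14m + 2 = z² have no solution in positive integers m, x, y, z. -/
theorem stmt_14 :
    ¬ ∃ m x y z : ℤ, 0 < m ∧ 0 < x ∧ 0 < y ∧ 0 < z ∧
      m + 2 = x ^ 2 ∧ 7 * m + 2 = y ^ 2 ∧ 14 * m + 2 = z ^ 2 := by
  rintro ⟨m, x, y, z, _, _, _, _, h1, h2, h3⟩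
  have e1 := congrArg (fun t : ℤ => (t : ZMod 8)) h1
  have e2 := congrArg (fun t : ℤ => (t : ZMod 8)) h2
  have e3 := congrArg (fun t : ℤ => (t : ZMod 8)) h3
  push_cast at e1 e2 e3
  revert e1 e2 e3
  generalize (m : ZMod 8) = a
  generalize (x : ZMod 8) = b
  generalize (y : ZMod 8) = c
  generalize (z : ZMod 8) = d
  revert a b c d
  decide
end

section
/- The simultaneous conditions 3m − 3 = x², 4m − 3 = y², 13m − 3 = z² have no solution with m a positive integer, m ∉ {3, 4, 13}, and x, y, z integers. -/
lemma aux8 : ∀ m x y z : ZMod 8,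
    ¬ (3 * m - 3 = x ^ 2 ∧ 4 * m - 3 = y ^ 2 ∧ 13 * m - 3 = z ^ 2) := by decide

theorem stmt_15 :
    ¬ ∃ m : ℤ, 0 < m ∧ m ∉ ({3, 4, 13} : Set ℤ) ∧
      ∃ x y z : ℤ, 3 * m - 3 = x ^ 2 ∧ 4 * m - 3 = y ^ 2 ∧ 13 * m - 3 = z ^ 2 := by
  rintro ⟨m, -, -, x, y, z, h1, h2, h3⟩
  exact aux8 (m : ZMod 8) x y z
    ⟨by exact_mod_cast congrArg (Int.cast : ℤ → ZMod 8) h1,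
     by exact_mod_cast congrArg (Int.cast : ℤ → ZMod 8) h2,
     by exact_mod_cast congrArg (Int.cast : ℤ → ZMod 8) h3⟩
end
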